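/- Comparison lemma for zero-sum LQ games: Let (K, L) and (K̂, L̂) be two pairs of stabilizing feedback gains with corresponding value matrices X and X̂ (solutions of the respective Lyapunov equations). Writing A_{K,L} = A - B₁K - B₂L, U = R₁K - B₁ᵀX A_{K,L}, V = -R₂L - B₂ᵀX A_{K,L}, one has X - X̂ = A_{K̂,L̂}ᵀ(X - X̂)A_{K̂,L̂} + (K - K̂)ᵀU + Uᵀ(K - K̂) - (K - K̂)ᵀR₁(K - K̂) + (L - L̂)ᵀV + Vᵀ(L - L̂) + (L - L̂)ᵀR₂(L - L̂) - (A_{K,L} - A_{K̂,L̂})ᵀ X (A_{K,L} - A_{K̂,L̂}). -/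

import Mathlib

/-!
Substitute both Lyapunov equations into `X - X̂`: what remains is a polynomial identity in the
data, valid as soon as `X`, `R₁`, `R₂` are symmetric (the cross terms `Uᵀ (K - K̂)` produce
`A_{K,L}ᵀ Xᵀ B₁`, which must match `A_{K,L}ᵀ X B₁`). Symmetry of `X` is the only analytic input:
`Xᵀ` solves the same Lyapunov equation, so `Y = Xᵀ - X` satisfies `Y = (Mᵏ)ᵀ Y Mᵏ` for
`M = A_{K,L}`, and `Mᵏ → 0` because, by Gelfand's formula, `‖Mᵏ‖^(1/k)` tends to the spectral
radius of `M`, which is `< 1`.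
-/

open Matrix

/-- A real square matrix is Schur stable if every complex eigenvalue has modulus `< 1`. -/
def IsSchur {n : ℕ} (M : Matrix (Fin n) (Fin n) ℝ) : Prop :=
  ∀ μ ∈ spectrum ℂ (M.map Complex.ofReal), ‖μ‖ < 1

open Filter Topology

theorem spectralRadius_lt_one_of_forall_norm_lt_one {A : Type*} [NormedRing A] [NormedAlgebra ℂ A]
    [CompleteSpace A] {a : A} (h : ∀ μ ∈ spectrum ℂ a, ‖μ‖ < 1) : spectralRadius ℂ a < 1 := by
  rcases (spectrum ℂ a).eq_empty_or_nonempty with hempty | hne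
  · simp [spectralRadius, hempty]
  · exact_mod_cast spectrum.spectralRadius_lt_of_forall_lt_of_nonempty hne
      fun μ hμ => by simpa [← NNReal.coe_lt_coe] using h μ hμ

theorem tendsto_pow_atTop_nhds_zero_of_spectralRadius_lt_one {A : Type*} [NormedRing A]
    [NormedAlgebra ℂ A] [CompleteSpace A] {a : A} (h : spectralRadius ℂ a < 1) :
    Tendsto (a ^ ·) atTop (𝓝 0) := by
  obtain ⟨r, hρr, hr1⟩ := ENNReal.lt_iff_exists_nnreal_btwn.mp h
  have hbound : ∀ᶠ k : ℕ in atTop, ‖a ^ k‖ ≤ (r : ℝ) ^ k := by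
    filter_upwards [(spectrum.pow_nnnorm_pow_one_div_tendsto_nhds_spectralRadius a
      ).eventually_lt_const hρr, eventually_gt_atTop 0] with k hk hk0
    rw [one_div, ENNReal.rpow_inv_lt_iff (by positivity), ENNReal.rpow_natCast] at hk
    exact_mod_cast hk.le
  exact squeeze_zero_norm' hbound
    (tendsto_pow_atTop_nhds_zero_of_lt_one r.2 (by exact_mod_cast hr1))

attribute [local instance] Matrix.linftyOpNormedRing Matrix.linftyOpNormedAlgebra

theorem IsSchur.tendsto_pow_atTop_nhds_zero {n : ℕ} {M : Matrix (Fin n) (Fin n) ℝ}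
    (hM : IsSchur M) : Tendsto (M ^ ·) atTop (𝓝 0) := by
  have hC := tendsto_pow_atTop_nhds_zero_of_spectralRadius_lt_one
    (spectralRadius_lt_one_of_forall_norm_lt_one hM)
  have hre : Continuous fun N : Matrix (Fin n) (Fin n) ℂ => N.map Complex.re :=
    continuous_id.matrix_map Complex.continuous_re
  convert (hre.tendsto 0).comp hC using 2 with k
  · have : M.map Complex.ofReal ^ k = (M ^ k).map Complex.ofReal :=
      (map_pow Complex.ofRealHom.mapMatrix M k).symm
    ext i j
    simp [this]
  · simp

theorem Matrix.IsSymm.transpose_mul_mul {m n α : Type*} [Fintype m] [CommSemiring α]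
    {R : Matrix m m α} (hR : R.IsSymm) (K : Matrix m n α) : (Kᵀ * R * K).IsSymm := by
  simp only [IsSymm, transpose_mul, transpose_transpose, hR.eq, Matrix.mul_assoc]

theorem IsSchur.eq_zero_of_transpose_mul_mul_eq {n : ℕ} {M Y : Matrix (Fin n) (Fin n) ℝ}
    (hM : IsSchur M) (hY : Mᵀ * Y * M = Y) : Y = 0 := by
  have hinv : ∀ k : ℕ, (M ^ k)ᵀ * Y * M ^ k = Y := by
    intro k
    induction k with
    | zero => simp
    | succ k ih =>
      calc (M ^ (k + 1))ᵀ * Y * M ^ (k + 1) = (M ^ k)ᵀ * (Mᵀ * Y * M) * M ^ k := by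
            simp only [pow_succ', transpose_mul, Matrix.mul_assoc]
        _ = Y := by rw [hY, ih]
  have hcont : Continuous fun N : Matrix (Fin n) (Fin n) ℝ => Nᵀ * Y * N :=
    (continuous_id.matrix_transpose.matrix_mul continuous_const).matrix_mul continuous_id
  have hlim := (hcont.tendsto 0).comp hM.tendsto_pow_atTop_nhds_zero
  simpa using tendsto_nhds_unique tendsto_const_nhds (hlim.congr hinv)

theorem IsSchur.isSymm_of_transpose_mul_mul_add_eq {n : ℕ} {M X S : Matrix (Fin n) (Fin n) ℝ}
    (hM : IsSchur M) (hS : S.IsSymm) (hX : Mᵀ * X * M + S = X) : X.IsSymm := by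
  have hXt : Mᵀ * Xᵀ * M + S = Xᵀ := by
    simpa only [transpose_add, transpose_mul, transpose_transpose, hS.eq, Matrix.mul_assoc]
      using congrArg transpose hX
  have hdiff : Mᵀ * (Xᵀ - X) * M = Xᵀ - X :=
    calc Mᵀ * (Xᵀ - X) * M = (Mᵀ * Xᵀ * M + S) - (Mᵀ * X * M + S) := by
          rw [Matrix.mul_sub, Matrix.sub_mul]; abel
      _ = Xᵀ - X := by rw [hXt, hX]
  exact sub_eq_zero.mp (hM.eq_zero_of_transpose_mul_mul_eq hdiff)

theorem lq_game_comparison_general {n m₁ m₂ : ℕ}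
    (A : Matrix (Fin n) (Fin n) ℝ) (B₁ : Matrix (Fin n) (Fin m₁) ℝ)
    (B₂ : Matrix (Fin n) (Fin m₂) ℝ) (Q : Matrix (Fin n) (Fin n) ℝ)
    (R₁ : Matrix (Fin m₁) (Fin m₁) ℝ) (R₂ : Matrix (Fin m₂) (Fin m₂) ℝ)
    (K Khat : Matrix (Fin m₁) (Fin n) ℝ) (L Lhat : Matrix (Fin m₂) (Fin n) ℝ)
    (X Xhat : Matrix (Fin n) (Fin n) ℝ)
    (hQ : Q.IsSymm) (hR₁ : R₁.PosDef) (hR₂ : R₂.PosDef)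
    (hstab : IsSchur (A - B₁ * K - B₂ * L))
    (hX : (A - B₁ * K - B₂ * L)ᵀ * X * (A - B₁ * K - B₂ * L)
            + Q + Kᵀ * R₁ * K - Lᵀ * R₂ * L = X)
    (hXhat : (A - B₁ * Khat - B₂ * Lhat)ᵀ * Xhat * (A - B₁ * Khat - B₂ * Lhat)
            + Q + Khatᵀ * R₁ * Khat - Lhatᵀ * R₂ * Lhat = Xhat)
    (U : Matrix (Fin m₁) (Fin n) ℝ) (V : Matrix (Fin m₂) (Fin n) ℝ)
    (hU : U = R₁ * K - B₁ᵀ * X * (A - B₁ * K - B₂ * L))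
    (hV : V = -(R₂ * L) - B₂ᵀ * X * (A - B₁ * K - B₂ * L)) :
    X - Xhat =
      (A - B₁ * Khat - B₂ * Lhat)ᵀ * (X - Xhat) * (A - B₁ * Khat - B₂ * Lhat)
      + (K - Khat)ᵀ * U + Uᵀ * (K - Khat) - (K - Khat)ᵀ * R₁ * (K - Khat)
      + (L - Lhat)ᵀ * V + Vᵀ * (L - Lhat) + (L - Lhat)ᵀ * R₂ * (L - Lhat)
      - ((A - B₁ * K - B₂ * L) - (A - B₁ * Khat - B₂ * Lhat))ᵀ * X
          * ((A - B₁ * K - B₂ * L) - (A - B₁ * Khat - B₂ * Lhat)) := by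
  have hR₁s : R₁.IsSymm := isHermitian_iff_isSymm.mp hR₁.isHermitian
  have hR₂s : R₂.IsSymm := isHermitian_iff_isSymm.mp hR₂.isHermitian
  have hXs : Xᵀ = X := by
    refine (hstab.isSymm_of_transpose_mul_mul_add_eq (S := Q + Kᵀ * R₁ * K - Lᵀ * R₂ * L)
      ((hQ.add (hR₁s.transpose_mul_mul K)).sub (hR₂s.transpose_mul_mul L)) ?_).eq
    simpa only [add_sub_assoc, add_assoc] using hX
  subst hU hV
  conv_lhs => rw [← hX, ← hXhat]
  simp only [transpose_sub, transpose_mul, transpose_neg, transpose_transpose, Matrix.mul_sub,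
    Matrix.sub_mul, Matrix.mul_neg, Matrix.neg_mul, hXs, hR₁s.eq, hR₂s.eq, Matrix.mul_assoc]
  abel

/-- Comparison lemma for zero-sum LQ games (form centered at `(K, L)`). -/
theorem lq_game_comparison {n m₁ m₂ : ℕ}
    (A : Matrix (Fin n) (Fin n) ℝ) (B₁ : Matrix (Fin n) (Fin m₁) ℝ)
    (B₂ : Matrix (Fin n) (Fin m₂) ℝ) (Q : Matrix (Fin n) (Fin n) ℝ)
    (R₁ : Matrix (Fin m₁) (Fin m₁) ℝ) (R₂ : Matrix (Fin m₂) (Fin m₂) ℝ)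
    (K Khat : Matrix (Fin m₁) (Fin n) ℝ) (L Lhat : Matrix (Fin m₂) (Fin n) ℝ)
    (X Xhat : Matrix (Fin n) (Fin n) ℝ)
    (hQ : Q.IsSymm) (hR₁ : R₁.PosDef) (hR₂ : R₂.PosDef)
    (hstab : IsSchur (A - B₁ * K - B₂ * L))
    (hstabhat : IsSchur (A - B₁ * Khat - B₂ * Lhat))
    (hX : (A - B₁ * K - B₂ * L)ᵀ * X * (A - B₁ * K - B₂ * L)
            + Q + Kᵀ * R₁ * K - Lᵀ * R₂ * L = X)
    (hXhat : (A - B₁ * Khat - B₂ * Lhat)ᵀ * Xhat * (A - B₁ * Khat - B₂ * Lhat)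
            + Q + Khatᵀ * R₁ * Khat - Lhatᵀ * R₂ * Lhat = Xhat)
    (U : Matrix (Fin m₁) (Fin n) ℝ) (V : Matrix (Fin m₂) (Fin n) ℝ)
    (hU : U = R₁ * K - B₁ᵀ * X * (A - B₁ * K - B₂ * L))
    (hV : V = -(R₂ * L) - B₂ᵀ * X * (A - B₁ * K - B₂ * L)) :
    X - Xhat =
      (A - B₁ * Khat - B₂ * Lhat)ᵀ * (X - Xhat) * (A - B₁ * Khat - B₂ * Lhat)
      + (K - Khat)ᵀ * U + Uᵀ * (K - Khat) - (K - Khat)ᵀ * R₁ * (K - Khat)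
      + (L - Lhat)ᵀ * V + Vᵀ * (L - Lhat) + (L - Lhat)ᵀ * R₂ * (L - Lhat)
      - ((A - B₁ * K - B₂ * L) - (A - B₁ * Khat - B₂ * Lhat))ᵀ * X
          * ((A - B₁ * K - B₂ * L) - (A - B₁ * Khat - B₂ * Lhat)) :=
  lq_game_comparison_general A B₁ B₂ Q R₁ R₂ K Khat L Lhat X Xhat hQ hR₁ hR₂ hstab hX hXhat U V hU
    hV
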